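/- Let n ≥ 1 and let P, Q be homogeneous elements of degree n of the free Lie algebra L. Then [x,P] + [y,Q] = 0 if and only if there exists a homogeneous element p of degree n+1 of T with γ(p) = 0 such that P = γ(p_x) and Q = γ(p_y), where p = x·p_x + y·p_y is the decomposition of p into its x-part and y-part. -/

import Mathlib

noncomputable section

open scoped BigOperators

variable (K : Type) [Field K] [CharZero K]

/-- The free associative algebra `T = K⟨x,y⟩`, realized as the monoid algebra of the
free monoid on two generators. -/
abbrev T := MonoidAlgebra K (FreeMonoid (Fin 2))

/-- The word `v₁⋯vₙ` (a list of letters) as an element of `T`. -/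
def word (l : List (Fin 2)) : T K := MonoidAlgebra.single (FreeMonoid.ofList l) 1

/-- The generator `x`. -/
def X : T K := word K [0]

/-- The generator `y`. -/
def Y : T K := word K [1]

/-- Right-nested bracket `[v₁,[v₂,…,[vₙ₋₁,vₙ]…]]` of a word. -/
def brList : List (Fin 2) → T K
  | [] => 0
  | [v] => word K [v]
  | v :: rest => word K [v] * brList rest - brList rest * word K [v]

/-- The Dynkin map `γ : T → T`, sending a word `v₁⋯vₙ` to
`(1/n)[v₁,[v₂,…,[vₙ₋₁,vₙ]…]]` (and `1 ↦ 0`). -/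
def dynkin : T K →ₗ[K] T K :=
  (Finsupp.linearCombination K fun w : FreeMonoid (Fin 2) =>
    ((w.toList.length : K)⁻¹) • brList K w.toList)
    ∘ₗ (MonoidAlgebra.coeffLinearEquiv K).toLinearMap

attribute [local instance] LieRing.ofAssociativeRing

/-- The free Lie algebra `L` on `x, y`, as the Lie subalgebra of `T` generated by `x` and `y`. -/
def L : LieSubalgebra K (T K) := LieSubalgebra.lieSpan K (T K) {X K, Y K}

/-- The degree-`n` homogeneous component `T_n` of `T`, spanned by the words of length `n`. -/
def homog (n : ℕ) : Submodule K (T K) :=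
  Submodule.span K { t | ∃ l : List (Fin 2), l.length = n ∧ t = word K l }

/-- The value `σ(i)` of a permutation of `{0,…,n-1}` on a natural number (junk value `0`
outside the range). -/
def permVal {n : ℕ} (σ : Equiv.Perm (Fin n)) (i : ℕ) : ℕ :=
  if h : i < n then (σ ⟨i, h⟩ : ℕ) else 0

/-- The (0-indexed) descent set of a permutation: positions `i ∈ {0,…,n-2}` with
`σ(i) > σ(i+1)`. -/
def descSet {n : ℕ} (σ : Equiv.Perm (Fin n)) : Finset ℕ :=
  (Finset.range (n - 1)).filter fun i => permVal σ (i + 1) < permVal σ i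

/-- The number of descents of a permutation. -/
def descNum {n : ℕ} (σ : Equiv.Perm (Fin n)) : ℕ := (descSet σ).card

/-- `DSet n k` is the set of permutations of `{0,…,n-1}` whose descent set is exactly
the first `k` positions (this is `D_{1..k}` of the paper, in 0-indexed form). -/
def DSet (n k : ℕ) : Finset (Equiv.Perm (Fin n)) :=
  Finset.univ.filter fun σ => descSet σ = Finset.range k

/-- The Eulerian coefficient `c_σ = (-1)^{d(σ)} (binom (n-1) (d σ))⁻¹`. -/
def eulCoeff {n : ℕ} (σ : Equiv.Perm (Fin n)) : K :=
  (-1 : K) ^ descNum σ * ((Nat.choose (n - 1) (descNum σ) : K))⁻¹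

/-- The degree-`n` Eulerian idempotent applied to the word `w₁⋯wₙ` given by
`v : Fin n → Fin 2`: `eₙ(w) = Σ_σ c_σ w^σ`. -/
def eul (n : ℕ) (v : Fin n → Fin 2) : T K :=
  ∑ σ : Equiv.Perm (Fin n), eulCoeff K σ • word K (List.ofFn fun i => v (σ i))

/-- The `a`-part of an element of `T`: the linear map sending a word `a·w ↦ w` and
any word not starting with the letter `a` (or the empty word) to `0`.  For `p` with zero
constant term, `p = x·(letterPart 0 p) + y·(letterPart 1 p)`. -/
def letterPart (a : Fin 2) : T K →ₗ[K] T K :=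
  (Finsupp.linearCombination K fun w : FreeMonoid (Fin 2) =>
    match w.toList with
    | [] => 0
    | b :: rest => if b = a then word K rest else 0)
    ∘ₗ (MonoidAlgebra.coeffLinearEquiv K).toLinearMap

/-- The algebra endomorphism `s : T → T` with `s(x) = -y`, `s(y) = -x`. -/
def sMap : T K →ₐ[K] T K :=
  MonoidAlgebra.lift K (T K) (FreeMonoid (Fin 2))
    (FreeMonoid.lift fun a : Fin 2 => if a = 0 then -(Y K) else -(X K))

/-! Write `θ` for the Dynkin map without its factor `1/n`, so `θ = n • γ` on `T_n`. Extending
`v ↦ ad v` from the letters to an algebra map `ρ : T → End T` gives `θ (a * b) = ρ a (θ b)`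
whenever `b` has no constant term. An induction over brackets shows that `ρ u = ad u` and
`θ u = deg u • u` on Lie elements (Dynkin–Specht–Wever). So for `p = x p_x + y p_y` of degree
`n + 1`, `(n + 1) γ p = θ p = [x, θ p_x] + [y, θ p_y] = n ([x, γ p_x] + [y, γ p_y])`, and
both directions follow, taking `p = x P + y Q` for the forward one. -/

section

variable {F : Type} [Field F]

lemma word_mul_word (l₁ l₂ : List (Fin 2)) :
    word F l₁ * word F l₂ = word F (l₁ ++ l₂) := by
  simp [word, MonoidAlgebra.single_mul_single, FreeMonoid.ofList_append]

lemma single_eq_smul_word (w : FreeMonoid (Fin 2)) (c : F) :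
    (MonoidAlgebra.single w c : T F) = c • word F w.toList := by
  rw [word, FreeMonoid.ofList_toList, MonoidAlgebra.smul_single, smul_eq_mul, mul_one]

lemma linearCombination_comp_coeff_word (f : FreeMonoid (Fin 2) → T F) (l : List (Fin 2)) :
    (Finsupp.linearCombination F f ∘ₗ (MonoidAlgebra.coeffLinearEquiv F).toLinearMap)
      (word F l) = f (FreeMonoid.ofList l) := by
  simp [word]

lemma dynkin_word (l : List (Fin 2)) :
    dynkin F (word F l) = (l.length : F)⁻¹ • brList F l :=
  linearCombination_comp_coeff_word _ l

lemma letterPart_word_cons (a b : Fin 2) (l : List (Fin 2)) :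
    letterPart F a (word F (b :: l)) = if b = a then word F l else 0 :=
  linearCombination_comp_coeff_word _ (b :: l)

variable (F) in
def bracketing : T F →ₗ[F] T F :=
  Finsupp.linearCombination F (fun w : FreeMonoid (Fin 2) => brList F w.toList)
    ∘ₗ (MonoidAlgebra.coeffLinearEquiv F).toLinearMap

variable (F) in
def eulerDeriv : T F →ₗ[F] T F :=
  Finsupp.linearCombination F
      (fun w : FreeMonoid (Fin 2) => (w.toList.length : F) • word F w.toList)
    ∘ₗ (MonoidAlgebra.coeffLinearEquiv F).toLinearMap

variable (F) in
def adLift : T F →ₐ[F] Module.End F (T F) :=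
  MonoidAlgebra.lift F _ (FreeMonoid (Fin 2))
    (FreeMonoid.lift fun a : Fin 2 => LieAlgebra.ad F (T F) (word F [a]))

lemma bracketing_word (l : List (Fin 2)) : bracketing F (word F l) = brList F l :=
  linearCombination_comp_coeff_word _ l

lemma eulerDeriv_word (l : List (Fin 2)) :
    eulerDeriv F (word F l) = (l.length : F) • word F l :=
  linearCombination_comp_coeff_word _ l

lemma adLift_word_singleton (a : Fin 2) :
    adLift F (word F [a]) = LieAlgebra.ad F (T F) (word F [a]) := by
  rw [adLift, word, MonoidAlgebra.lift_single, one_smul]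
  exact FreeMonoid.lift_eval_of _ a

lemma brList_cons_of_ne_nil (a : Fin 2) {l : List (Fin 2)} (h : l ≠ []) :
    brList F (a :: l) = ⁅word F [a], brList F l⁆ := by
  cases l with
  | nil => exact absurd rfl h
  | cons b t => rfl

lemma brList_append (l₁ : List (Fin 2)) {l₂ : List (Fin 2)} (h : l₂ ≠ []) :
    brList F (l₁ ++ l₂) = adLift F (word F l₁) (brList F l₂) := by
  induction l₁ with
  | nil => rw [List.nil_append, show word F [] = 1 from rfl, map_one, Module.End.one_apply]
  | cons a t ih =>
    rw [List.cons_append, brList_cons_of_ne_nil a (by simp [h]), ih,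
      show word F (a :: t) = word F [a] * word F t from (word_mul_word [a] t).symm, map_mul,
      Module.End.mul_apply, adLift_word_singleton, LieAlgebra.ad_apply]

lemma bracketing_mul_word (a : T F) {l : List (Fin 2)} (h : l ≠ []) :
    bracketing F (a * word F l) = adLift F a (brList F l) := by
  induction a using MonoidAlgebra.induction_linear with
  | zero => simp
  | add f g hf hg => rw [add_mul, map_add, hf, hg, map_add, LinearMap.add_apply]
  | single w c =>
    rw [single_eq_smul_word, smul_mul_assoc, map_smul, word_mul_word, bracketing_word,
      brList_append _ h, map_smul, LinearMap.smul_apply]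

variable (F) in
def augIdeal : Ideal (T F) :=
  Ideal.span {t | ∃ l : List (Fin 2), l ≠ [] ∧ t = word F l}

lemma bracketing_mul (a : T F) {b : T F} (hb : b ∈ augIdeal F) :
    bracketing F (a * b) = adLift F a (bracketing F b) := by
  induction hb using Submodule.span_induction generalizing a with
  | mem t ht =>
    obtain ⟨l, hl, rfl⟩ := ht
    rw [bracketing_mul_word a hl, bracketing_word]
  | zero => simp
  | add u v _ _ hu hv => simp only [mul_add, map_add, hu, hv]
  | smul c u _ hu => rw [smul_eq_mul, ← mul_assoc, hu, hu, map_mul, Module.End.mul_apply]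

lemma eulerDeriv_mul (a b : T F) :
    eulerDeriv F (a * b) = eulerDeriv F a * b + a * eulerDeriv F b := by
  induction a using MonoidAlgebra.induction_linear with
  | zero => simp
  | add f g hf hg => rw [add_mul, map_add, hf, hg, map_add]; noncomm_ring
  | single w c =>
    induction b using MonoidAlgebra.induction_linear with
    | zero => simp
    | add f g hf hg => rw [mul_add, map_add, hf, hg, map_add]; noncomm_ring
    | single w' c' =>
      simp only [single_eq_smul_word, map_smul, smul_mul_assoc, mul_smul_comm, word_mul_word,
        eulerDeriv_word, List.length_append, Nat.cast_add, add_smul, smul_add]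
      module

lemma eulerDeriv_lie (a b : T F) :
    eulerDeriv F ⁅a, b⁆ = ⁅eulerDeriv F a, b⁆ + ⁅a, eulerDeriv F b⁆ := by
  simp only [Ring.lie_def, map_sub, eulerDeriv_mul]
  abel

lemma mem_augIdeal_of_mem_L {u : T F} (hu : u ∈ L F) : u ∈ augIdeal F := by
  unfold L at hu
  induction hu using LieSubalgebra.lieSpan_induction with
  | mem x hx =>
    rcases hx with rfl | rfl
    exacts [Ideal.subset_span ⟨[0], by simp, rfl⟩, Ideal.subset_span ⟨[1], by simp, rfl⟩]
  | zero => exact zero_mem _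
  | add _ _ _ _ hx hy => exact add_mem hx hy
  | smul c _ _ hx => exact Submodule.smul_of_tower_mem _ c hx
  | lie _ _ _ _ hx hy =>
    rw [Ring.lie_def]
    exact sub_mem (Ideal.mul_mem_left _ _ hy) (Ideal.mul_mem_left _ _ hx)

lemma adLift_of_mem_L {u : T F} (hu : u ∈ L F) : adLift F u = LieAlgebra.ad F (T F) u := by
  unfold L at hu
  induction hu using LieSubalgebra.lieSpan_induction with
  | mem x hx => rcases hx with rfl | rfl <;> exact adLift_word_singleton _
  | zero => simp
  | add _ _ _ _ hx hy => rw [map_add, map_add, hx, hy]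
  | smul c _ _ hx => rw [map_smul, map_smul, hx]
  | lie x y _ _ hx hy =>
    rw [LieHom.map_lie, ← hx, ← hy, Ring.lie_def, Ring.lie_def, map_sub, map_mul, map_mul]

lemma bracketing_of_mem_L {u : T F} (hu : u ∈ L F) : bracketing F u = eulerDeriv F u := by
  unfold L at hu
  induction hu using LieSubalgebra.lieSpan_induction with
  | mem x hx =>
    rcases hx with rfl | rfl <;> simp [X, Y, bracketing_word, eulerDeriv_word, brList]
  | zero => simp
  | add _ _ _ _ hx hy => rw [map_add, map_add, hx, hy]
  | smul c _ _ hx => rw [map_smul, map_smul, hx]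
  | lie x y hxL hyL hx hy =>
    rw [eulerDeriv_lie, Ring.lie_def x y, map_sub, bracketing_mul _ (mem_augIdeal_of_mem_L hyL),
      bracketing_mul _ (mem_augIdeal_of_mem_L hxL), adLift_of_mem_L hxL, adLift_of_mem_L hyL,
      hx, hy, LieAlgebra.ad_apply, LieAlgebra.ad_apply, ← lie_skew y (eulerDeriv F x)]
    abel

lemma eulerDeriv_of_mem_homog {n : ℕ} {u : T F} (hu : u ∈ homog F n) :
    eulerDeriv F u = (n : F) • u :=
  LinearMap.eqOn_span (g := (n : F) • LinearMap.id)
    (by rintro _ ⟨l, rfl, rfl⟩; exact eulerDeriv_word l) hu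

lemma bracketing_eq_smul_dynkin [CharZero F] {n : ℕ} (hn : n ≠ 0) {u : T F}
    (hu : u ∈ homog F n) : bracketing F u = (n : F) • dynkin F u :=
  LinearMap.eqOn_span (g := (n : F) • dynkin F)
    (by
      rintro _ ⟨l, rfl, rfl⟩
      rw [LinearMap.smul_apply, bracketing_word, dynkin_word,
        smul_inv_smul₀ (Nat.cast_ne_zero.mpr hn)])
    hu

lemma dynkin_eq_self_of_mem_L [CharZero F] {n : ℕ} (hn : n ≠ 0) {u : T F} (hL : u ∈ L F)
    (hu : u ∈ homog F n) : dynkin F u = u :=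
  smul_right_injective (T F) (Nat.cast_ne_zero.mpr hn : (n : F) ≠ 0) <| by
    change (n : F) • dynkin F u = (n : F) • u
    rw [← bracketing_eq_smul_dynkin hn hu, bracketing_of_mem_L hL, eulerDeriv_of_mem_homog hu]

lemma mem_augIdeal_of_mem_homog {n : ℕ} (hn : n ≠ 0) {u : T F} (hu : u ∈ homog F n) :
    u ∈ augIdeal F :=
  (Submodule.span_le (p := (augIdeal F).restrictScalars F)).mpr
    (by
      rintro _ ⟨l, rfl, rfl⟩
      exact Ideal.subset_span ⟨l, List.ne_nil_of_length_pos (Nat.pos_of_ne_zero hn), rfl⟩)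
    hu

lemma letter_mul_mem_homog (a : Fin 2) {n : ℕ} {q : T F} (hq : q ∈ homog F n) :
    word F [a] * q ∈ homog F (n + 1) :=
  (Submodule.span_le (p := (homog F (n + 1)).comap (LinearMap.mulLeft F (word F [a])))).mpr
    (by
      rintro _ ⟨l, rfl, rfl⟩
      exact Submodule.subset_span ⟨a :: l, rfl, word_mul_word [a] l⟩)
    hq

lemma letterPart_mem_homog (a : Fin 2) {n : ℕ} {p : T F} (hp : p ∈ homog F (n + 1)) :
    letterPart F a p ∈ homog F n :=
  (Submodule.span_le (p := (homog F n).comap (letterPart F a))).mpr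
    (by
      rintro _ ⟨_ | ⟨b, l⟩, hl, rfl⟩
      · simp at hl
      rw [SetLike.mem_coe, Submodule.mem_comap, letterPart_word_cons]
      split_ifs
      · exact Submodule.subset_span ⟨l, Nat.succ_injective hl, rfl⟩
      · exact zero_mem _)
    hp

lemma letterPart_letter_mul (a b : Fin 2) (q : T F) :
    letterPart F a (word F [b] * q) = if b = a then q else 0 := by
  induction q using MonoidAlgebra.induction_linear with
  | zero => simp
  | add f g hf hg => rw [mul_add, map_add, hf, hg]; split_ifs <;> simp
  | single w c =>
    rw [single_eq_smul_word, mul_smul_comm, map_smul, word_mul_word, List.singleton_append,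
      letterPart_word_cons]
    split_ifs <;> simp

lemma eq_X_mul_add_Y_mul_of_mem_homog {n : ℕ} {p : T F} (hp : p ∈ homog F (n + 1)) :
    p = X F * letterPart F 0 p + Y F * letterPart F 1 p :=
  LinearMap.eqOn_span (f := LinearMap.id)
    (g := LinearMap.mulLeft F (X F) ∘ₗ letterPart F 0 +
      LinearMap.mulLeft F (Y F) ∘ₗ letterPart F 1)
    (by
      rintro _ ⟨_ | ⟨b, l⟩, hl, rfl⟩
      · simp at hl
      fin_cases b <;> simp [letterPart_word_cons, X, Y, word_mul_word])
    hp

lemma bracketing_X_mul_add_Y_mul {a b : T F} (ha : a ∈ augIdeal F) (hb : b ∈ augIdeal F) :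
    bracketing F (X F * a + Y F * b) = ⁅X F, bracketing F a⁆ + ⁅Y F, bracketing F b⁆ := by
  rw [map_add, bracketing_mul _ ha, bracketing_mul _ hb, X, Y, adLift_word_singleton,
    adLift_word_singleton, LieAlgebra.ad_apply, LieAlgebra.ad_apply]

end

/-- Homogeneous Lie elements `P, Q` of degree `n ≥ 1` satisfy `[x,P] + [y,Q] = 0` iff
there is a homogeneous `p` of degree `n+1` in the kernel of `γ` with `P = γ(p_x)` and
`Q = γ(p_y)`, where `p = x·p_x + y·p_y`. -/
theorem stmt13 (n : ℕ) (hn : 1 ≤ n) (P Q : T K)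
    (hPL : P ∈ L K) (hPn : P ∈ homog K n) (hQL : Q ∈ L K) (hQn : Q ∈ homog K n) :
    ⁅X K, P⁆ + ⁅Y K, Q⁆ = 0 ↔
      ∃ p : T K, p ∈ homog K (n + 1) ∧ dynkin K p = 0 ∧
        P = dynkin K (letterPart K 0 p) ∧ Q = dynkin K (letterPart K 1 p) := by
  have hn₀ : n ≠ 0 := Nat.one_le_iff_ne_zero.mp hn
  have hnK : (n : K) ≠ 0 := Nat.cast_ne_zero.mpr hn₀
  constructor
  · intro h
    have hp : X K * P + Y K * Q ∈ homog K (n + 1) :=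
      add_mem (letter_mul_mem_homog 0 hPn) (letter_mul_mem_homog 1 hQn)
    refine ⟨X K * P + Y K * Q, hp, ?_, ?_, ?_⟩
    · have hθ := bracketing_eq_smul_dynkin n.succ_ne_zero hp
      rw [bracketing_X_mul_add_Y_mul (mem_augIdeal_of_mem_homog hn₀ hPn)
        (mem_augIdeal_of_mem_homog hn₀ hQn), bracketing_of_mem_L hPL, bracketing_of_mem_L hQL,
        eulerDeriv_of_mem_homog hPn, eulerDeriv_of_mem_homog hQn, lie_smul, lie_smul,
        ← smul_add, h, smul_zero, eq_comm, smul_eq_zero] at hθ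
      exact hθ.resolve_left (Nat.cast_ne_zero.mpr n.succ_ne_zero)
    · simp [X, Y, letterPart_letter_mul, dynkin_eq_self_of_mem_L hn₀ hPL hPn]
    · simp [X, Y, letterPart_letter_mul, dynkin_eq_self_of_mem_L hn₀ hQL hQn]
  · rintro ⟨p, hp, hγ, rfl, rfl⟩
    have hp₀ := letterPart_mem_homog 0 hp
    have hp₁ := letterPart_mem_homog 1 hp
    have hθ := bracketing_eq_smul_dynkin n.succ_ne_zero hp
    rw [hγ, smul_zero, eq_X_mul_add_Y_mul_of_mem_homog hp,
      bracketing_X_mul_add_Y_mul (mem_augIdeal_of_mem_homog hn₀ hp₀)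
        (mem_augIdeal_of_mem_homog hn₀ hp₁), bracketing_eq_smul_dynkin hn₀ hp₀,
      bracketing_eq_smul_dynkin hn₀ hp₁, lie_smul, lie_smul, ← smul_add, smul_eq_zero] at hθ
    exact hθ.resolve_left hnK

end
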